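/- For any permutation w ∈ S_n and any index i, if w(i) > w(i+1) then ∂_i(𝔖_w) = 𝔖_{ws_i}, and if w(i) < w(i+1) then ∂_i(𝔖_w) = 0. -/

import Mathlib

open MvPolynomial Classical

/-- The divided difference operator ∂ on ℤ[x_1,...,x_n] for the pair of variables
x_i, x_j (intended: j = i+1): ∂(f) = (f - s_{ij}·f)/(x_i - x_j), defined via choice
from the (always valid) divisibility of f - s_{ij}·f by x_i - x_j. -/
noncomputable def ddiff (n : ℕ) (i j : Fin n) (f : MvPolynomial (Fin n) ℤ) :
    MvPolynomial (Fin n) ℤ :=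
  if h : (X i - X j : MvPolynomial (Fin n) ℤ) ∣ (f - rename (Equiv.swap i j) f) then
    h.choose
  else 0

/-- The isobaric divided difference π_i(f) = ∂_i((1 - x_{i+1})f). -/
noncomputable def isobaric (n : ℕ) (i j : Fin n) (f : MvPolynomial (Fin n) ℤ) :
    MvPolynomial (Fin n) ℤ :=
  ddiff n i j ((1 - X j) * f)

/-- `IsSchubert n w f` holds iff f is the Schubert polynomial 𝔖_w:
𝔖_{w_0} = x_1^{n-1}x_2^{n-2}···x_{n-1} for the longest element w_0, and
𝔖_w = ∂_i(𝔖_{w s_i}) whenever w(i) < w(i+1). -/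
inductive IsSchubert (n : ℕ) : Equiv.Perm (Fin n) → MvPolynomial (Fin n) ℤ → Prop where
  | w0 : IsSchubert n (Fin.revPerm) (∏ i : Fin n, X i ^ (n - 1 - (i : ℕ)))
  | step (w : Equiv.Perm (Fin n)) (i j : Fin n) (hij : (i : ℕ) + 1 = (j : ℕ))
      (hasc : w i < w j) (f : MvPolynomial (Fin n) ℤ)
      (hf : IsSchubert n (w * Equiv.swap i j) f) :
      IsSchubert n w (ddiff n i j f)

/-- `IsGroth n w f` holds iff f is the Grothendieck polynomial 𝔊_w:
𝔊_{w_0} = x_1^{n-1}x_2^{n-2}···x_{n-1}, and 𝔊_w = π_i(𝔊_{w s_i}) whenever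
w(i) < w(i+1), where π_i(f) = ∂_i((1-x_{i+1})f). -/
inductive IsGroth (n : ℕ) : Equiv.Perm (Fin n) → MvPolynomial (Fin n) ℤ → Prop where
  | w0 : IsGroth n (Fin.revPerm) (∏ i : Fin n, X i ^ (n - 1 - (i : ℕ)))
  | step (w : Equiv.Perm (Fin n)) (i j : Fin n) (hij : (i : ℕ) + 1 = (j : ℕ))
      (hasc : w i < w j) (f : MvPolynomial (Fin n) ℤ)
      (hf : IsGroth n (w * Equiv.swap i j) f) :
      IsGroth n w (isobaric n i j f)


/-!
By induction on the number of non-inversions, two defining chains for `𝔖_w` that start at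
different ascents `a < c` of `w` can be rerouted through a common Schubert polynomial further
down, and the two composites of divided differences then agree: `∂_a ∂_c = ∂_c ∂_a` when
`c ≥ a + 2`, and otherwise the braid relation `∂_a ∂_{a+1} ∂_a = ∂_{a+1} ∂_a ∂_{a+1}` holds
because, multiplied by the Vandermonde product, both sides become the alternating sum of `f`
over the permutations of `x_a, x_{a+1}, x_{a+2}`. Hence `𝔖_w` is unique. At a descent `i` of `w`,
`∂_i 𝔖_w` then satisfies the recursion defining `𝔖_{w s_i}`; at an ascent,
`𝔖_w = ∂_i 𝔖_{w s_i}` and `∂_i ∂_i = 0`.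
-/

section DividedDifference

variable {σ R : Type*} [CommRing R]

theorem X_sub_X_ne_zero [Nontrivial R] {i j : σ} (hij : i ≠ j) :
    (X i - X j : MvPolynomial σ R) ≠ 0 :=
  sub_ne_zero.mpr ((X_injective (R := R)).ne hij)

theorem rename_perm_mul (τ τ' : Equiv.Perm σ) (f : MvPolynomial σ R) :
    rename ⇑(τ * τ') f = rename τ (rename τ' f) := by
  rw [Equiv.Perm.coe_mul, rename_rename]

variable [DecidableEq σ]

theorem X_sub_X_dvd_X_sub_X_swap (i j k : σ) :
    (X i - X j : MvPolynomial σ R) ∣ X k - X (Equiv.swap i j k) := by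
  rw [Equiv.swap_apply_def]
  split_ifs with hi hj
  · rw [hi]
  · rw [hj, dvd_sub_comm]
  · simp

theorem X_sub_X_dvd_sub_rename_swap (i j : σ) (f : MvPolynomial σ R) :
    (X i - X j : MvPolynomial σ R) ∣ f - rename (Equiv.swap i j) f := by
  induction f using MvPolynomial.induction_on with
  | C a => simp
  | add p q hp hq => simpa only [map_add, add_sub_add_comm] using dvd_add hp hq
  | mul_X p k hp =>
    have h : p * X k - rename (Equiv.swap i j) (p * X k) =
        (p - rename (Equiv.swap i j) p) * X k +
          rename (Equiv.swap i j) p * (X k - X (Equiv.swap i j k)) := by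
      rw [map_mul, rename_X]
      ring
    rw [h]
    exact dvd_add (hp.mul_right _) ((X_sub_X_dvd_X_sub_X_swap i j k).mul_left _)

theorem rename_swap_rename_swap (i j : σ) (f : MvPolynomial σ R) :
    rename (Equiv.swap i j) (rename (Equiv.swap i j) f) = f := by
  rw [← rename_perm_mul, Equiv.swap_mul_self, Equiv.Perm.coe_one, rename_id_apply]

end DividedDifference

theorem Equiv.swap_braid {α : Type*} [DecidableEq α] {a b c : α}
    (hab : a ≠ b) (hbc : b ≠ c) (hac : a ≠ c) :
    swap a b * swap b c * swap a b = swap b c * swap a b * swap b c := by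
  rw [swap_mul_swap_mul_swap hab hac, swap_comm a b, swap_comm b c,
    swap_mul_swap_mul_swap hbc.symm hac.symm, swap_comm]

section ddiff

variable {n : ℕ} {i j : Fin n}

theorem X_sub_X_mul_ddiff (i j : Fin n) (f : MvPolynomial (Fin n) ℤ) :
    (X i - X j) * ddiff n i j f = f - rename (Equiv.swap i j) f := by
  rw [ddiff, dif_pos (X_sub_X_dvd_sub_rename_swap i j f)]
  exact (X_sub_X_dvd_sub_rename_swap i j f).choose_spec.symm

theorem ddiff_eq_of_X_sub_X_mul_eq (hij : i ≠ j) {f g : MvPolynomial (Fin n) ℤ}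
    (h : (X i - X j) * g = f - rename (Equiv.swap i j) f) : ddiff n i j f = g :=
  mul_left_cancel₀ (X_sub_X_ne_zero hij) ((X_sub_X_mul_ddiff i j f).trans h.symm)

theorem rename_swap_ddiff (hij : i ≠ j) (f : MvPolynomial (Fin n) ℤ) :
    rename (Equiv.swap i j) (ddiff n i j f) = ddiff n i j f := by
  have h := congrArg (rename (Equiv.swap i j)) (X_sub_X_mul_ddiff i j f)
  simp only [map_mul, map_sub, rename_X, Equiv.swap_apply_left, Equiv.swap_apply_right,
    rename_swap_rename_swap] at h
  refine mul_left_cancel₀ (X_sub_X_ne_zero hij) ?_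
  linear_combination -h - X_sub_X_mul_ddiff i j f

theorem ddiff_eq_zero_of_rename_swap_eq (hij : i ≠ j) {f : MvPolynomial (Fin n) ℤ}
    (h : rename (Equiv.swap i j) f = f) : ddiff n i j f = 0 :=
  ddiff_eq_of_X_sub_X_mul_eq hij (by rw [h]; ring)

theorem ddiff_ddiff_self (hij : i ≠ j) (f : MvPolynomial (Fin n) ℤ) :
    ddiff n i j (ddiff n i j f) = 0 :=
  ddiff_eq_zero_of_rename_swap_eq hij (rename_swap_ddiff hij f)

theorem ddiff_neg (hij : i ≠ j) (f : MvPolynomial (Fin n) ℤ) :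
    ddiff n i j (-f) = -ddiff n i j f :=
  ddiff_eq_of_X_sub_X_mul_eq hij (by rw [map_neg]; linear_combination -X_sub_X_mul_ddiff i j f)

theorem ddiff_comm_args_eq_neg (hij : i ≠ j) (f : MvPolynomial (Fin n) ℤ) :
    ddiff n j i f = -ddiff n i j f :=
  ddiff_eq_of_X_sub_X_mul_eq hij.symm
    (by rw [Equiv.swap_comm]; linear_combination X_sub_X_mul_ddiff i j f)

theorem X_sub_X_mul_X_sub_X_mul_ddiff_ddiff {k l : Fin n} (hik : i ≠ k) (hil : i ≠ l)
    (hjk : j ≠ k) (hjl : j ≠ l) (f : MvPolynomial (Fin n) ℤ) :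
    (X i - X j) * (X k - X l) * ddiff n i j (ddiff n k l f) =
      f - rename (Equiv.swap k l) f - rename (Equiv.swap i j) f +
        rename (Equiv.swap i j) (rename (Equiv.swap k l) f) := by
  have h := congrArg (rename (Equiv.swap i j)) (X_sub_X_mul_ddiff k l f)
  rw [map_mul, map_sub, map_sub, rename_X, rename_X,
    Equiv.swap_apply_of_ne_of_ne hik.symm hjk.symm,
    Equiv.swap_apply_of_ne_of_ne hil.symm hjl.symm] at h
  linear_combination (X k - X l) * X_sub_X_mul_ddiff i j (ddiff n k l f) +
    X_sub_X_mul_ddiff k l f - h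

theorem ddiff_ddiff_comm {k l : Fin n} (hij : i ≠ j) (hkl : k ≠ l)
    (hik : i ≠ k) (hil : i ≠ l) (hjk : j ≠ k) (hjl : j ≠ l) (f : MvPolynomial (Fin n) ℤ) :
    ddiff n i j (ddiff n k l f) = ddiff n k l (ddiff n i j f) := by
  have hcomm : rename (Equiv.swap i j) (rename (Equiv.swap k l) f) =
      rename (Equiv.swap k l) (rename (Equiv.swap i j) f) := by
    rw [← rename_perm_mul, ← rename_perm_mul, Equiv.mul_swap_eq_swap_mul,
      Equiv.swap_apply_of_ne_of_ne hik.symm hjk.symm,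
      Equiv.swap_apply_of_ne_of_ne hil.symm hjl.symm]
  refine mul_left_cancel₀ (mul_ne_zero (X_sub_X_ne_zero hij) (X_sub_X_ne_zero hkl)) ?_
  rw [X_sub_X_mul_X_sub_X_mul_ddiff_ddiff hik hil hjk hjl, mul_comm (X i - X j),
    X_sub_X_mul_X_sub_X_mul_ddiff_ddiff hik.symm hjk.symm hil.symm hjl.symm, hcomm]
  ring

variable {a b c : Fin n}

theorem vandermonde_mul_ddiff_ddiff_ddiff (hab : a ≠ b) (hbc : b ≠ c) (hac : a ≠ c)
    (f : MvPolynomial (Fin n) ℤ) :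
    (X a - X b) * (X b - X c) * (X a - X c) * ddiff n a b (ddiff n b c (ddiff n a b f)) =
      f - rename (Equiv.swap a b) f - rename (Equiv.swap b c) f +
        rename (Equiv.swap b c) (rename (Equiv.swap a b) f) +
        rename (Equiv.swap a b) (rename (Equiv.swap b c) f) -
        rename (Equiv.swap a b) (rename (Equiv.swap b c) (rename (Equiv.swap a b) f)) := by
  have e₁ := X_sub_X_mul_ddiff a b f
  have e₂ := X_sub_X_mul_ddiff b c (ddiff n a b f)
  have e₃ := X_sub_X_mul_ddiff a b (ddiff n b c (ddiff n a b f))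
  have e₂' := congrArg (rename (Equiv.swap a b)) e₂
  simp only [map_mul, map_sub, rename_X, Equiv.swap_apply_right,
    Equiv.swap_apply_of_ne_of_ne hac.symm hbc.symm, rename_swap_ddiff hab] at e₂'
  have e₁' := congrArg (rename (Equiv.swap b c)) e₁
  simp only [map_mul, map_sub, rename_X, Equiv.swap_apply_of_ne_of_ne hab hac,
    Equiv.swap_apply_left] at e₁'
  have e₁'' := congrArg (rename (Equiv.swap a b)) e₁'
  simp only [map_mul, map_sub, rename_X, Equiv.swap_apply_left,
    Equiv.swap_apply_of_ne_of_ne hac.symm hbc.symm] at e₁''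
  linear_combination (X b - X c) * (X a - X c) * e₃ + (X a - X c) * e₂ - (X b - X c) * e₂' +
    e₁ - e₁' + e₁''

theorem ddiff_braid (hab : a ≠ b) (hbc : b ≠ c) (hac : a ≠ c) (f : MvPolynomial (Fin n) ℤ) :
    ddiff n a b (ddiff n b c (ddiff n a b f)) = ddiff n b c (ddiff n a b (ddiff n b c f)) := by
  have h := vandermonde_mul_ddiff_ddiff_ddiff hab hbc hac f
  have h' := vandermonde_mul_ddiff_ddiff_ddiff hbc.symm hab.symm hac.symm f
  simp only [Equiv.swap_comm c b, Equiv.swap_comm b a, ddiff_comm_args_eq_neg hbc,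
    ddiff_comm_args_eq_neg hab, ddiff_neg hab, neg_neg] at h'
  have hbraid : rename (Equiv.swap a b) (rename (Equiv.swap b c) (rename (Equiv.swap a b) f)) =
      rename (Equiv.swap b c) (rename (Equiv.swap a b) (rename (Equiv.swap b c) f)) := by
    rw [← rename_perm_mul, ← rename_perm_mul, Equiv.swap_braid hab hbc hac, rename_perm_mul,
      rename_perm_mul]
  refine mul_left_cancel₀ (mul_ne_zero (mul_ne_zero (X_sub_X_ne_zero hab) (X_sub_X_ne_zero hbc))
    (X_sub_X_ne_zero hac)) ?_
  linear_combination h - h' - hbraid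

end ddiff

section nonInversions

variable {n : ℕ}

def nonInversions (w : Equiv.Perm (Fin n)) : Finset (Fin n × Fin n) :=
  Finset.univ.filter fun p => p.1 < p.2 ∧ w p.1 < w p.2

theorem mem_nonInversions {w : Equiv.Perm (Fin n)} {p : Fin n × Fin n} :
    p ∈ nonInversions w ↔ p.1 < p.2 ∧ w p.1 < w p.2 := by
  simp [nonInversions]

theorem swap_lt_swap_iff_of_adjacent {i j a b : Fin n} (hij : (i : ℕ) + 1 = j)
    (h₁ : (a, b) ≠ (i, j)) (h₂ : (a, b) ≠ (j, i)) :
    Equiv.swap i j a < Equiv.swap i j b ↔ a < b := by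
  simp only [ne_eq, Prod.mk.injEq, Fin.ext_iff] at h₁ h₂
  rw [Fin.lt_def, Fin.lt_def, Equiv.swap_apply_def, Equiv.swap_apply_def]
  split_ifs <;> simp only [Fin.ext_iff] at * <;> omega

theorem card_nonInversions_mul_swap (w : Equiv.Perm (Fin n)) {i j : Fin n}
    (hij : (i : ℕ) + 1 = j) (hasc : w i < w j) :
    (nonInversions (w * Equiv.swap i j)).card + 1 = (nonInversions w).card := by
  have hlt : i < j := Fin.lt_def.mpr (by omega)
  have hmem : (i, j) ∈ nonInversions w := mem_nonInversions.mpr ⟨hlt, hasc⟩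
  have hmap : (nonInversions (w * Equiv.swap i j)).map
      (Equiv.prodCongr (Equiv.swap i j) (Equiv.swap i j)).toEmbedding =
      (nonInversions w).erase (i, j) := by
    ext ⟨a, b⟩
    simp only [Finset.mem_map_equiv, Equiv.prodCongr_symm, Equiv.symm_swap, Equiv.prodCongr_apply,
      Prod.map, mem_nonInversions, Finset.mem_erase, Equiv.Perm.mul_apply, Equiv.swap_apply_self]
    by_cases h₁ : (a, b) = (i, j)
    · obtain ⟨rfl, rfl⟩ := Prod.mk.inj h₁
      simp [hlt.not_gt]
    by_cases h₂ : (a, b) = (j, i)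
    · obtain ⟨rfl, rfl⟩ := Prod.mk.inj h₂
      simp [hlt.not_gt, hasc.not_gt]
    rw [swap_lt_swap_iff_of_adjacent hij h₁ h₂]
    simp [h₁]
  rw [← Finset.card_erase_add_one hmem, ← hmap, Finset.card_map]

end nonInversions

theorem Fin.antitone_of_adjacent_le {n : ℕ} {α : Type*} [Preorder α] {f : Fin n → α}
    (h : ∀ i j : Fin n, (i : ℕ) + 1 = j → f j ≤ f i) : Antitone f := by
  cases n with
  | zero => exact fun a => a.elim0
  | succ m => exact Fin.antitone_iff_succ_le.mpr fun i => h _ _ (by simp)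

theorem Fin.eq_revPerm_of_antitone {n : ℕ} {w : Equiv.Perm (Fin n)} (hw : Antitone w) :
    w = Fin.revPerm := by
  have hmono : StrictMono (w ∘ Fin.rev) :=
    StrictAnti.comp (hw.strictAnti_of_injective w.injective) Fin.rev_strictAnti
  refine Equiv.ext fun x => ?_
  simpa using congrFun hmono.eq_id x.rev

theorem Fin.revPerm_adjacent_not_lt {n : ℕ} {i j : Fin n} (hij : (i : ℕ) + 1 = j) :
    ¬ Fin.revPerm i < Fin.revPerm j := by
  rw [Fin.revPerm_apply, Fin.revPerm_apply, Fin.rev_lt_rev, not_lt, Fin.le_def]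
  omega

theorem exists_isSchubert {n : ℕ} (w : Equiv.Perm (Fin n)) : ∃ S, IsSchubert n w S := by
  by_cases hasc : ∃ i j : Fin n, (i : ℕ) + 1 = j ∧ w i < w j
  · obtain ⟨i, j, hij, hlt⟩ := hasc
    have := card_nonInversions_mul_swap w hij hlt
    obtain ⟨S, hS⟩ := exists_isSchubert (w * Equiv.swap i j)
    exact ⟨_, .step w i j hij hlt S hS⟩
  · simp only [not_exists, not_and, not_lt] at hasc
    rw [Fin.eq_revPerm_of_antitone (Fin.antitone_of_adjacent_le hasc)]
    exact ⟨_, .w0⟩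
termination_by (nonInversions w).card

namespace IsSchubert

variable {n : ℕ} {w : Equiv.Perm (Fin n)} {f g : MvPolynomial (Fin n) ℤ}

theorem ddiff_of_descent {v : Equiv.Perm (Fin n)} {i j : Fin n}
    (hf : IsSchubert n v f) (hij : (i : ℕ) + 1 = j) (hdesc : v j < v i) :
    IsSchubert n (v * Equiv.swap i j) (ddiff n i j f) :=
  .step _ i j hij (by simpa using hdesc) f (by rwa [Equiv.mul_swap_mul_self])

theorem ddiff_eq_ddiff_of_commuting_ascents {a b c d : Fin n}
    (hab : (a : ℕ) + 1 = b) (hcd : (c : ℕ) + 1 = d) (hbc : (b : ℕ) < c)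
    (hwab : w a < w b) (hwcd : w c < w d)
    (hf : IsSchubert n (w * Equiv.swap a b) f) (hg : IsSchubert n (w * Equiv.swap c d) g)
    (huniq_ab : {S | IsSchubert n (w * Equiv.swap a b) S}.Subsingleton)
    (huniq_cd : {S | IsSchubert n (w * Equiv.swap c d) S}.Subsingleton) :
    ddiff n a b f = ddiff n c d g := by
  have hca : c ≠ a := Fin.ne_of_val_ne (by omega)
  have hcb : c ≠ b := Fin.ne_of_val_ne (by omega)
  have hda : d ≠ a := Fin.ne_of_val_ne (by omega)
  have hdb : d ≠ b := Fin.ne_of_val_ne (by omega)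
  have hcomm : Equiv.swap a b * Equiv.swap c d = Equiv.swap c d * Equiv.swap a b := by
    rw [Equiv.mul_swap_eq_swap_mul, Equiv.swap_apply_of_ne_of_ne hca hcb,
      Equiv.swap_apply_of_ne_of_ne hda hdb]
  obtain ⟨h, hh⟩ := exists_isSchubert (w * Equiv.swap a b * Equiv.swap c d)
  have hf' : f = ddiff n c d h := huniq_ab hf (by
    simpa using hh.ddiff_of_descent hcd (by
      simpa [Equiv.swap_apply_of_ne_of_ne hca hcb, Equiv.swap_apply_of_ne_of_ne hda hdb]
        using hwcd))
  rw [mul_assoc, hcomm, ← mul_assoc] at hh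
  have hg' : g = ddiff n a b h := huniq_cd hg (by
    simpa using hh.ddiff_of_descent hab (by
      simpa [Equiv.swap_apply_of_ne_of_ne hca.symm hda.symm,
        Equiv.swap_apply_of_ne_of_ne hcb.symm hdb.symm] using hwab))
  rw [hf', hg', ddiff_ddiff_comm (Fin.ne_of_val_ne (by omega)) (Fin.ne_of_val_ne (by omega))
    hca.symm hda.symm hcb.symm hdb.symm]

theorem ddiff_eq_ddiff_of_braid_ascents {a b c : Fin n}
    (hab : (a : ℕ) + 1 = b) (hbc : (b : ℕ) + 1 = c)
    (hwab : w a < w b) (hwbc : w b < w c)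
    (hf : IsSchubert n (w * Equiv.swap a b) f) (hg : IsSchubert n (w * Equiv.swap b c) g)
    (huniq_ab : {S | IsSchubert n (w * Equiv.swap a b) S}.Subsingleton)
    (huniq_bc : {S | IsSchubert n (w * Equiv.swap b c) S}.Subsingleton) :
    ddiff n a b f = ddiff n b c g := by
  have hab' : a ≠ b := Fin.ne_of_val_ne (by omega)
  have hbc' : b ≠ c := Fin.ne_of_val_ne (by omega)
  have hac : a ≠ c := Fin.ne_of_val_ne (by omega)
  obtain ⟨h, hh⟩ := exists_isSchubert (w * Equiv.swap a b * Equiv.swap b c * Equiv.swap a b)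
  have hf' : f = ddiff n b c (ddiff n a b h) := by
    have h₁ := hh.ddiff_of_descent hab (by
      simpa [Equiv.swap_apply_of_ne_of_ne hac.symm hbc'.symm, Equiv.swap_apply_of_ne_of_ne hab' hac]
        using hwbc)
    refine huniq_ab hf ?_
    simpa using h₁.ddiff_of_descent hbc (by
      simpa [Equiv.swap_apply_of_ne_of_ne hac.symm hbc'.symm] using hwab.trans hwbc)
  have hbraid : w * Equiv.swap a b * Equiv.swap b c * Equiv.swap a b =
      w * Equiv.swap b c * Equiv.swap a b * Equiv.swap b c := by
    simpa only [mul_assoc] using congrArg (w * ·) (Equiv.swap_braid hab' hbc' hac)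
  rw [hbraid] at hh
  have hg' : g = ddiff n a b (ddiff n b c h) := by
    have h₁ := hh.ddiff_of_descent hbc (by
      simpa [Equiv.swap_apply_of_ne_of_ne hac.symm hbc'.symm, Equiv.swap_apply_of_ne_of_ne hab' hac]
        using hwab)
    refine huniq_bc hg ?_
    simpa using h₁.ddiff_of_descent hab (by
      simpa [Equiv.swap_apply_of_ne_of_ne hab' hac] using hwab.trans hwbc)
  rw [hf', hg', ddiff_braid hab' hbc' hac]

theorem ddiff_eq_ddiff_of_ascents {a b c d : Fin n}
    (hab : (a : ℕ) + 1 = b) (hcd : (c : ℕ) + 1 = d) (hac : (a : ℕ) < c)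
    (hwab : w a < w b) (hwcd : w c < w d)
    (hf : IsSchubert n (w * Equiv.swap a b) f) (hg : IsSchubert n (w * Equiv.swap c d) g)
    (huniq_ab : {S | IsSchubert n (w * Equiv.swap a b) S}.Subsingleton)
    (huniq_cd : {S | IsSchubert n (w * Equiv.swap c d) S}.Subsingleton) :
    ddiff n a b f = ddiff n c d g := by
  obtain hbc | hbc : (b : ℕ) = c ∨ (b : ℕ) < c := by omega
  · obtain rfl : b = c := Fin.ext hbc
    exact ddiff_eq_ddiff_of_braid_ascents hab hcd hwab hwcd hf hg huniq_ab huniq_cd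
  · exact ddiff_eq_ddiff_of_commuting_ascents hab hcd hbc hwab hwcd hf hg huniq_ab huniq_cd

theorem subsingleton (w : Equiv.Perm (Fin n)) : {S | IsSchubert n w S}.Subsingleton := by
  intro S hS T hT
  cases hS with
  | w0 =>
    cases hT with
    | w0 => rfl
    | step _ i j hij hasc => exact absurd hasc (Fin.revPerm_adjacent_not_lt hij)
  | step _ a b hab hwab f hf =>
    cases hT with
    | w0 => exact absurd hwab (Fin.revPerm_adjacent_not_lt hab)
    | step _ c d hcd hwcd g hg =>
      have := card_nonInversions_mul_swap w hab hwab
      have := card_nonInversions_mul_swap w hcd hwcd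
      have huniq_ab := subsingleton (w * Equiv.swap a b)
      have huniq_cd := subsingleton (w * Equiv.swap c d)
      rcases lt_trichotomy (a : ℕ) c with hac | hac | hac
      · exact ddiff_eq_ddiff_of_ascents hab hcd hac hwab hwcd hf hg huniq_ab huniq_cd
      · obtain rfl : a = c := Fin.ext hac
        obtain rfl : b = d := Fin.ext (by omega)
        rw [huniq_ab hf hg]
      · exact (ddiff_eq_ddiff_of_ascents hcd hab hac hwcd hwab hg hf huniq_cd huniq_ab).symm
termination_by (nonInversions w).card

end IsSchubert

/-- for w ∈ S_n and any index i: if w(i) > w(i+1) then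
∂_i(𝔖_w) = 𝔖_{w s_i}, and if w(i) < w(i+1) then ∂_i(𝔖_w) = 0. -/
theorem ddiff_schubert (n : ℕ) (w : Equiv.Perm (Fin n)) (i j : Fin n)
    (hij : (i : ℕ) + 1 = (j : ℕ)) (S S' : MvPolynomial (Fin n) ℤ)
    (hS : IsSchubert n w S) (hS' : IsSchubert n (w * Equiv.swap i j) S') :
    (w j < w i → ddiff n i j S = S') ∧ (w i < w j → ddiff n i j S = 0) := by
  refine ⟨fun hdesc => IsSchubert.subsingleton _ (hS.ddiff_of_descent hij hdesc) hS',
    fun hasc => ?_⟩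
  rw [IsSchubert.subsingleton w hS (IsSchubert.step w i j hij hasc S' hS'),
    ddiff_ddiff_self (Fin.ne_of_val_ne (by omega))]
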